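/- Let 1 < p < q < 5 with p ≥ 9/5. Set α = (p-1)/2, β = (q-1)/2. Then the improper integral ∫_0^1 \frac{(1-s^{β})\bigl((5-p+2(q-p))(1-s^{α}) - (5-q)(1-s^{β})\bigr)}{(s^{α}-s^{β})^{5/2}}\,ds diverges to +∞. -/

import Mathlib

/-!
Write the integrand as `N(s) / (s^α - s^β)^γ` with `γ = 5/2` and
`N(s) = (1 - s^β)(A(1 - s^α) - B(1 - s^β))`. Near `0`, `N(s) → A - B = 3(q - p) > 0` while
`(s^α - s^β)^γ ~ s^(αγ)` with `αγ = 5(p - 1)/4 ≥ 1`, so the integrand eventually dominates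
`(A - B) / (2s)` and the integral over `(a, 1)` grows at least like `-log a`. Near `1` both
factors of `N` vanish to first order and `s^α - s^β ~ (β - α)(1 - s)`, so the integrand is
`O((1 - s)^(2 - γ))`, integrable as `γ < 3`.
-/

open MeasureTheory Filter Set Real Topology

theorem integrableOn_Ioo_sub_rpow {r : ℝ} (hr : -1 < r) (c b : ℝ) :
    IntegrableOn (fun s : ℝ => (b - s) ^ r) (Ioo c b) := by
  have h :=
    ((intervalIntegral.intervalIntegrable_rpow' hr (a := 0) (b := b - c)).comp_sub_left b).symm
  simp only [sub_zero, sub_sub_cancel] at h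
  exact h.1.mono_set Ioo_subset_Ioc_self

theorem integrableOn_Ico_of_tendsto_mul_sub_rpow {f : ℝ → ℝ} {a b r L : ℝ} (hr : r < 1)
    (hf : ContinuousOn f (Ico a b))
    (hlim : Tendsto (fun s => f s * (b - s) ^ r) (𝓝[<] b) (𝓝 L)) :
    IntegrableOn f (Ico a b) := by
  rcases le_or_gt b a with hba | hab
  · simp [Ico_eq_empty_of_le hba]
  obtain ⟨c, ⟨hac, hcb⟩, hc⟩ := (mem_nhdsLT_iff_exists_mem_Ico_Ioo_subset hab).1
    (hlim.abs.eventually (eventually_le_nhds (lt_add_one |L|)))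
  have hbound : ∀ s ∈ Ioo c b, ‖f s‖ ≤ (|L| + 1) * (b - s) ^ (-r) := by
    intro s hs
    have hpos : 0 < (b - s) ^ r := rpow_pos_of_pos (sub_pos.2 hs.2) r
    have := hc hs
    rw [mem_ofPred_eq, abs_mul, abs_of_pos hpos, ← le_div_iff₀ hpos] at this
    rwa [rpow_neg (sub_pos.2 hs.2).le, ← div_eq_mul_inv, Real.norm_eq_abs]
  have hnear : IntegrableOn f (Ioo c b) :=
    Integrable.mono' ((integrableOn_Ioo_sub_rpow (by linarith) c b).const_mul _)
      ((hf.mono fun s hs => ⟨hac.trans hs.1.le, hs.2⟩).aestronglyMeasurable measurableSet_Ioo)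
      ((ae_restrict_iff' measurableSet_Ioo).2 (ae_of_all _ hbound))
  have hfar : IntegrableOn f (Icc a c) :=
    (hf.mono (Icc_subset_Ico_right hcb)).integrableOn_Icc
  refine (hfar.union hnear).mono_set fun s hs => ?_
  rcases le_or_gt s c with hsc | hcs
  exacts [Or.inl ⟨hs.1, hsc⟩, Or.inr ⟨hcs, hs.2⟩]

theorem tendsto_one_sub_rpow_div_one_sub (γ : ℝ) :
    Tendsto (fun s : ℝ => (1 - s ^ γ) / (1 - s)) (𝓝[≠] 1) (𝓝 γ) := by
  have h := hasDerivAt_iff_tendsto_slope.1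
    (hasDerivAt_rpow_const (x := 1) (p := γ) (Or.inl one_ne_zero))
  rw [one_rpow, mul_one] at h
  refine h.congr fun s => ?_
  rw [slope_def_field, one_rpow, ← neg_div_neg_eq, neg_sub, neg_sub]

theorem tendsto_setIntegral_Ioo_atTop_of_eventually_div_le {f : ℝ → ℝ} {b k : ℝ}
    (hb : 0 < b) (hk : 0 < k) (hf : ∀ a ∈ Ioo 0 b, IntegrableOn f (Ico a b))
    (hlow : ∀ᶠ s in 𝓝[>] 0, k / s ≤ f s) :
    Tendsto (fun a => ∫ s in Ioo a b, f s) (𝓝[>] 0) atTop := by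
  obtain ⟨c, ⟨hc0, hcb⟩, hc⟩ := (mem_nhdsGT_iff_exists_mem_Ioc_Ioo_subset hb).1 hlow
  have hfc : IntegrableOn f (Ico c b) :=
    (hf (c / 2) ⟨half_pos hc0, by linarith⟩).mono_set
      (Ico_subset_Ico_left (half_le_self hc0.le))
  have hlower : ∀ a ∈ Ioo 0 c,
      k * (log c - log a) + ∫ s in Ico c b, f s ≤ ∫ s in Ioo a b, f s := by
    rintro a ⟨ha0, hac⟩
    have hfa : IntegrableOn f (Ioo a c) :=
      (hf a ⟨ha0, hac.trans_le hcb⟩).mono_set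
        (Ioo_subset_Ico_self.trans (Ico_subset_Ico_right hcb))
    have hinv : ∫ s in Ioo a c, k / s = k * (log c - log a) := by
      rw [← integral_Ioc_eq_integral_Ioo, ← intervalIntegral.integral_of_le hac.le]
      simp only [div_eq_mul_inv, intervalIntegral.integral_const_mul]
      rw [integral_inv_of_pos ha0 (ha0.trans hac), log_div hc0.ne' ha0.ne']
    have hmono : ∫ s in Ioo a c, k / s ≤ ∫ s in Ioo a c, f s := by
      refine setIntegral_mono_on ?_ hfa measurableSet_Ioo fun s hs => hc ⟨ha0.trans hs.1, hs.2⟩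
      exact (continuousOn_const.div continuousOn_id fun s hs =>
        (ha0.trans_le hs.1).ne').integrableOn_Icc.mono_set Ioo_subset_Icc_self
    rw [← Ioo_union_Ico_eq_Ioo hac hcb, setIntegral_union
      (Ico_disjoint_Ico_same.mono_left Ioo_subset_Ico_self) measurableSet_Ico hfa hfc]
    linarith
  have hlog : Tendsto (fun a => k * (log c - log a) + ∫ s in Ico c b, f s) (𝓝[>] 0) atTop := by
    refine tendsto_atTop_add_const_right _ _ (Tendsto.const_mul_atTop hk ?_)
    simp_rw [sub_eq_add_neg]
    exact tendsto_atTop_add_const_left _ _ (tendsto_neg_atBot_atTop.comp tendsto_log_nhdsGT_zero)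
  refine tendsto_atTop_mono' _ ?_ hlog
  filter_upwards [Ioo_mem_nhdsGT hc0] with a ha using hlower a ha

/-- With `A = 5 - p + 2(q - p)`, `B = 5 - q` and `γ = 5/2`, the integrand of the theorem. -/
noncomputable def integrand (A B α β γ s : ℝ) : ℝ :=
  (1 - s ^ β) * (A * (1 - s ^ α) - B * (1 - s ^ β)) / (s ^ α - s ^ β) ^ γ

section
variable {A B α β γ : ℝ}

theorem rpow_sub_rpow_pos {s : ℝ} (hs : s ∈ Ioo 0 1) (hαβ : α < β) : 0 < s ^ α - s ^ β :=
  sub_pos.2 (rpow_lt_rpow_of_exponent_gt hs.1 hs.2 hαβ)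

theorem continuousOn_integrand (hαβ : α < β) :
    ContinuousOn (integrand A B α β γ) (Ioo 0 1) := by
  have hrpow : ∀ δ : ℝ, ContinuousOn (fun x : ℝ => x ^ δ) (Ioo 0 1) :=
    fun δ => continuousOn_id.rpow_const fun x hx => Or.inl hx.1.ne'
  have hpowα := hrpow α
  have hpowβ := hrpow β
  refine ContinuousOn.div (by fun_prop)
    ((hpowα.sub hpowβ).rpow_const fun s hs => Or.inl (rpow_sub_rpow_pos hs hαβ).ne')
    fun s hs => (rpow_pos_of_pos (rpow_sub_rpow_pos hs hαβ) γ).ne'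

theorem tendsto_integrand_mul_rpow_nhdsGT_zero (hα : 0 < α) (hαβ : α < β) :
    Tendsto (fun s => integrand A B α β γ s * s ^ (α * γ)) (𝓝[>] 0) (𝓝 (A - B)) := by
  have hzero : ∀ δ : ℝ, 0 < δ → Tendsto (fun s : ℝ => s ^ δ) (𝓝[>] 0) (𝓝 0) :=
    fun δ hδ => ((continuous_rpow_const hδ.le).tendsto' 0 0 (zero_rpow hδ.ne')).mono_left
      nhdsWithin_le_nhds
  have hβ0 := hzero β (hα.trans hαβ)
  have hnum : Tendsto (fun s : ℝ => (1 - s ^ β) * (A * (1 - s ^ α) - B * (1 - s ^ β)))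
      (𝓝[>] 0) (𝓝 (A - B)) := by
    convert (tendsto_const_nhds.sub hβ0).mul ((tendsto_const_nhds.mul
      (tendsto_const_nhds.sub (hzero α hα))).sub (tendsto_const_nhds.mul
        (tendsto_const_nhds.sub hβ0))) using 2
    ring
  have hden : Tendsto (fun s : ℝ => (1 - s ^ (β - α)) ^ γ) (𝓝[>] 0) (𝓝 1) := by
    have := ((tendsto_const_nhds (x := (1 : ℝ))).sub (hzero _ (sub_pos.2 hαβ))).rpow_const
      (p := γ) (Or.inl (by norm_num))
    rwa [sub_zero, one_rpow] at this
  refine (div_one (A - B) ▸ hnum.div hden one_ne_zero).congr' ?_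
  filter_upwards [Ioo_mem_nhdsGT zero_lt_one] with s hs
  have hfactor : s ^ α - s ^ β = s ^ α * (1 - s ^ (β - α)) := by
    rw [mul_sub, mul_one, ← rpow_add hs.1, add_sub_cancel]
  have hle : 0 ≤ 1 - s ^ (β - α) :=
    sub_nonneg.2 (rpow_le_one hs.1.le hs.2.le (sub_pos.2 hαβ).le)
  have hpos : 0 < s ^ (α * γ) := rpow_pos_of_pos hs.1 _
  rw [Pi.div_apply, integrand, hfactor, mul_rpow (rpow_nonneg hs.1.le α) hle,
    ← rpow_mul hs.1.le]
  field_simp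

theorem eventually_div_le_integrand (hα : 0 < α) (hαβ : α < β) (hAB : B < A)
    (hαγ : 1 ≤ α * γ) :
    ∀ᶠ s in 𝓝[>] 0, (A - B) / 2 / s ≤ integrand A B α β γ s := by
  filter_upwards [(tendsto_integrand_mul_rpow_nhdsGT_zero (γ := γ) hα hαβ).eventually
      (eventually_ge_nhds (by linarith : (A - B) / 2 < A - B)),
    Ioo_mem_nhdsGT zero_lt_one] with s hlow hs
  have hpos : 0 < s ^ (α * γ) := rpow_pos_of_pos hs.1 _
  calc (A - B) / 2 / s ≤ (A - B) / 2 / s ^ (α * γ) :=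
        div_le_div_of_nonneg_left (by linarith) hpos
          (by simpa using rpow_le_rpow_of_exponent_ge hs.1 hs.2.le hαγ)
    _ ≤ integrand A B α β γ s := by rwa [div_le_iff₀ hpos]

theorem tendsto_integrand_mul_one_sub_rpow (hαβ : α < β) :
    Tendsto (fun s => integrand A B α β γ s * (1 - s) ^ (γ - 2)) (𝓝[<] 1)
      (𝓝 (β * (A * α - B * β) * (β - α)⁻¹ ^ γ)) := by
  have hslope := fun δ => (tendsto_one_sub_rpow_div_one_sub δ).mono_left (nhdsLT_le_nhdsNE 1)
  have hnum : Tendsto (fun s => (A * (1 - s ^ α) - B * (1 - s ^ β)) / (1 - s)) (𝓝[<] 1)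
      (𝓝 (A * α - B * β)) :=
    (((hslope α).const_mul A).sub ((hslope β).const_mul B)).congr fun s => by ring
  have hβα : β - α ≠ 0 := sub_ne_zero.2 hαβ.ne'
  have hden : Tendsto (fun s => (1 - s) / (s ^ α - s ^ β)) (𝓝[<] 1) (𝓝 (β - α)⁻¹) :=
    (((hslope β).sub (hslope α)).inv₀ hβα).congr fun s => by
      rw [div_sub_div_same, inv_div]; congr 1; ring
  refine (((hslope β).mul hnum).mul (hden.rpow_const (Or.inl (inv_ne_zero hβα)))).congr' ?_
  filter_upwards [Ioo_mem_nhdsLT zero_lt_one] with s hs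
  have h1s : 0 < 1 - s := sub_pos.2 hs.2
  rw [integrand, div_rpow h1s.le (rpow_sub_rpow_pos hs hαβ).le, rpow_sub h1s, rpow_two]
  field_simp

theorem integrableOn_integrand_Ico (hαβ : α < β) (hγ : γ < 3) {a : ℝ} (ha : 0 < a) :
    IntegrableOn (integrand A B α β γ) (Ico a 1) :=
  integrableOn_Ico_of_tendsto_mul_sub_rpow (by linarith)
    ((continuousOn_integrand hαβ).mono fun s hs => ⟨ha.trans_le hs.1, hs.2⟩)
    (tendsto_integrand_mul_one_sub_rpow hαβ)

theorem tendsto_setIntegral_integrand_atTop (hα : 0 < α) (hαβ : α < β) (hAB : B < A)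
    (hαγ : 1 ≤ α * γ) (hγ : γ < 3) :
    Tendsto (fun a => ∫ s in Ioo a 1, integrand A B α β γ s) (𝓝[>] 0) atTop :=
  tendsto_setIntegral_Ioo_atTop_of_eventually_div_le zero_lt_one (by linarith)
    (fun _ ha => integrableOn_integrand_Ico hαβ hγ ha.1)
    (eventually_div_le_integrand hα hαβ hAB hαγ)

end

theorem stmt_13_general (p q : ℝ) (hpq : p < q) (hp' : 9/5 ≤ p)
    (α β : ℝ) (hα : α = (p-1)/2) (hβ : β = (q-1)/2) :
    Tendsto
      (fun a : ℝ => ∫ s in Set.Ioo a 1,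
        (1 - s ^ β) * ((5 - p + 2*(q - p))*(1 - s ^ α) - (5 - q)*(1 - s ^ β)) /
          (s ^ α - s ^ β) ^ ((5:ℝ)/2))
      (nhdsWithin 0 (Set.Ioi 0)) atTop := by
  subst hα hβ
  exact tendsto_setIntegral_integrand_atTop (by linarith) (by linarith) (by linarith)
    (by linarith) (by norm_num)

theorem stmt_13 (p q : ℝ) (hp : 1 < p) (hpq : p < q) (hq : q < 5) (hp' : 9/5 ≤ p)
    (α β : ℝ) (hα : α = (p-1)/2) (hβ : β = (q-1)/2) :
    Tendsto
      (fun a : ℝ => ∫ s in Set.Ioo a 1,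
        (1 - s ^ β) * ((5 - p + 2*(q - p))*(1 - s ^ α) - (5 - q)*(1 - s ^ β)) /
          (s ^ α - s ^ β) ^ ((5:ℝ)/2))
      (nhdsWithin 0 (Set.Ioi 0)) atTop :=
  stmt_13_general p q hpq hp' α β hα hβ
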